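/- The first-order theory of algebraic (co)datatypes is undecidable: there exists a (co)datatype signature (one may take the datatypes bool = True | False, bitstring = e | 0(tail₀: bitstring) | 1(tail₁: bitstring), and dummy = f(b₁: bitstring, b₂: bitstring) | g(h: bool)) such that no algorithm decides, given a first-order sentence over this signature, whether the sentence is valid in the theory of (co)datatypes; equivalently, satisfiability of first-order formulae in this theory is undecidable. The same holds when the declarations are read as codatatype declarations. -/

import Mathlib

set_option linter.unusedVariables false

/-! The concrete (co)datatype signature
`bool = True | False`,
`bitstring = e | 0(tail₀: bitstring) | 1(tail₁: bitstring)`,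
`dummy = f(b₁: bitstring, b₂: bitstring) | g(h: bool)`.
As datatypes, `bool` is interpreted as `Bool`, `bitstring` as the finite bit
strings `List Bool` (`0` is `false`, `1` is `true`, a string is represented with
its first bit at the head) and `dummy` as `(List Bool × List Bool) ⊕ Bool`. -/

/-- Finite bit strings: the interpretation of the datatype `bitstring`. -/
abbrev Bits := List Bool

/-- The interpretation of the datatype `dummy`: either `f(b₁, b₂)` or `g(h)`. -/
abbrev Dummy := (Bits × Bits) ⊕ Bool

mutual
/-- Terms of sort `bool`. -/
inductive TB : Type
  | var (n : ℕ) : TB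
  | tt : TB
  | ff : TB
  | selH (t : TD) : TB
/-- Terms of sort `bitstring`. -/
inductive TS : Type
  | var (n : ℕ) : TS
  | eps : TS
  | b0 (t : TS) : TS
  | b1 (t : TS) : TS
  | selT0 (t : TS) : TS
  | selT1 (t : TS) : TS
  | selB1 (t : TD) : TS
  | selB2 (t : TD) : TS
/-- Terms of sort `dummy`. -/
inductive TD : Type
  | var (n : ℕ) : TD
  | fc (a b : TS) : TD
  | gc (b : TB) : TD
end

/-- First-order formulae over the signature, with sorted variables and
quantifiers. -/
inductive Fm : Type
  | eqB (a b : TB) : Fm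
  | eqS (a b : TS) : Fm
  | eqD (a b : TD) : Fm
  | not (φ : Fm) : Fm
  | and (φ ψ : Fm) : Fm
  | or (φ ψ : Fm) : Fm
  | imp (φ ψ : Fm) : Fm
  | exB (n : ℕ) (φ : Fm) : Fm
  | exS (n : ℕ) (φ : Fm) : Fm
  | exD (n : ℕ) (φ : Fm) : Fm
  | allB (n : ℕ) (φ : Fm) : Fm
  | allS (n : ℕ) (φ : Fm) : Fm
  | allD (n : ℕ) (φ : Fm) : Fm

/-- A structure of datatypes over this signature (standard selector semantics):
the domains and constructors are fixed; the selectors `tail₀, tail₁` (of the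
`bitstring` constructors `0` and `1`) and `b₁, b₂, h` (of the `dummy`
constructors `f` and `g`) are arbitrary functions satisfying the selector
equations on trees built with the right constructor. -/
structure Model where
  t0 : Bits → Bits
  t1 : Bits → Bits
  s1 : Dummy → Bits
  s2 : Dummy → Bits
  sh : Dummy → Bool
  ht0 : ∀ t : Bits, t0 (false :: t) = t
  ht1 : ∀ t : Bits, t1 (true :: t) = t
  hs1 : ∀ a b : Bits, s1 (Sum.inl (a, b)) = a
  hs2 : ∀ a b : Bits, s2 (Sum.inl (a, b)) = b
  hsh : ∀ b : Bool, sh (Sum.inr b) = b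

/-- A valuation of the sorted variables. -/
structure Valn where
  vb : ℕ → Bool
  vs : ℕ → Bits
  vd : ℕ → Dummy

mutual
/-- Evaluation of `bool` terms. -/
def evalB (M : Model) (ρ : Valn) : TB → Bool
  | .var n => ρ.vb n
  | .tt => true
  | .ff => false
  | .selH t => M.sh (evalD M ρ t)
/-- Evaluation of `bitstring` terms. -/
def evalS (M : Model) (ρ : Valn) : TS → Bits
  | .var n => ρ.vs n
  | .eps => []
  | .b0 t => false :: evalS M ρ t
  | .b1 t => true :: evalS M ρ t
  | .selT0 t => M.t0 (evalS M ρ t)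
  | .selT1 t => M.t1 (evalS M ρ t)
  | .selB1 t => M.s1 (evalD M ρ t)
  | .selB2 t => M.s2 (evalD M ρ t)
/-- Evaluation of `dummy` terms. -/
def evalD (M : Model) (ρ : Valn) : TD → Dummy
  | .var n => ρ.vd n
  | .fc a b => Sum.inl (evalS M ρ a, evalS M ρ b)
  | .gc b => Sum.inr (evalB M ρ b)
end

/-- Satisfaction of a formula in a structure of datatypes under a valuation. -/
def Sat (M : Model) (ρ : Valn) : Fm → Prop
  | .eqB a b => evalB M ρ a = evalB M ρ b
  | .eqS a b => evalS M ρ a = evalS M ρ b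
  | .eqD a b => evalD M ρ a = evalD M ρ b
  | .not φ => ¬ Sat M ρ φ
  | .and φ ψ => Sat M ρ φ ∧ Sat M ρ ψ
  | .or φ ψ => Sat M ρ φ ∨ Sat M ρ ψ
  | .imp φ ψ => Sat M ρ φ → Sat M ρ ψ
  | .exB n φ => ∃ b : Bool, Sat M { ρ with vb := Function.update ρ.vb n b } φ
  | .exS n φ => ∃ s : Bits, Sat M { ρ with vs := Function.update ρ.vs n s } φ
  | .exD n φ => ∃ d : Dummy, Sat M { ρ with vd := Function.update ρ.vd n d } φ
  | .allB n φ => ∀ b : Bool, Sat M { ρ with vb := Function.update ρ.vb n b } φ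
  | .allS n φ => ∀ s : Bits, Sat M { ρ with vs := Function.update ρ.vs n s } φ
  | .allD n φ => ∀ d : Dummy, Sat M { ρ with vd := Function.update ρ.vd n d } φ

/-- Validity in the theory of datatypes: truth in every structure under every
valuation. -/
def ValidData (φ : Fm) : Prop := ∀ (M : Model) (ρ : Valn), Sat M ρ φ

/-- Satisfiability in the theory of datatypes. -/
def SatData (φ : Fm) : Prop := ∃ (M : Model) (ρ : Valn), Sat M ρ φ

/-! The same declarations read as *codatatype* declarations: `bitstring` is then
interpreted as the finite or infinite bit streams. -/

/-- Finite or infinite bit streams: the interpretation of the codatatype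
`bitstring`. A stream is a function `ℕ → Option Bool` that, once undefined,
stays undefined. -/
def CoBits : Type := { f : ℕ → Option Bool // ∀ n, f n = none → f (n + 1) = none }

/-- The empty bit stream (the constructor `e`). -/
def CoBits.nil : CoBits := ⟨fun _ => none, fun _ _ => rfl⟩

/-- Prepending a bit to a bit stream (the constructors `0` and `1`). -/
def CoBits.cons (b : Bool) (t : CoBits) : CoBits :=
  ⟨fun n => match n with
    | 0 => some b
    | n + 1 => t.1 n,
   by
     intro n h
     match n with
     | 0 => exact absurd h (by simp)
     | n + 1 => exact t.2 n h⟩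

/-- The interpretation of the codatatype `dummy`. -/
abbrev CoDummy := (CoBits × CoBits) ⊕ Bool

/-- A structure of codatatypes over this signature (standard selector
semantics). -/
structure CoModel where
  t0 : CoBits → CoBits
  t1 : CoBits → CoBits
  s1 : CoDummy → CoBits
  s2 : CoDummy → CoBits
  sh : CoDummy → Bool
  ht0 : ∀ t : CoBits, t0 (CoBits.cons false t) = t
  ht1 : ∀ t : CoBits, t1 (CoBits.cons true t) = t
  hs1 : ∀ a b : CoBits, s1 (Sum.inl (a, b)) = a
  hs2 : ∀ a b : CoBits, s2 (Sum.inl (a, b)) = b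
  hsh : ∀ b : Bool, sh (Sum.inr b) = b

/-- A valuation of the sorted variables (codatatype version). -/
structure CoValn where
  vb : ℕ → Bool
  vs : ℕ → CoBits
  vd : ℕ → CoDummy

mutual
/-- Evaluation of `bool` terms (codatatype version). -/
def coevalB (M : CoModel) (ρ : CoValn) : TB → Bool
  | .var n => ρ.vb n
  | .tt => true
  | .ff => false
  | .selH t => M.sh (coevalD M ρ t)
/-- Evaluation of `bitstring` terms (codatatype version). -/
def coevalS (M : CoModel) (ρ : CoValn) : TS → CoBits
  | .var n => ρ.vs n
  | .eps => CoBits.nil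
  | .b0 t => CoBits.cons false (coevalS M ρ t)
  | .b1 t => CoBits.cons true (coevalS M ρ t)
  | .selT0 t => M.t0 (coevalS M ρ t)
  | .selT1 t => M.t1 (coevalS M ρ t)
  | .selB1 t => M.s1 (coevalD M ρ t)
  | .selB2 t => M.s2 (coevalD M ρ t)
/-- Evaluation of `dummy` terms (codatatype version). -/
def coevalD (M : CoModel) (ρ : CoValn) : TD → CoDummy
  | .var n => ρ.vd n
  | .fc a b => Sum.inl (coevalS M ρ a, coevalS M ρ b)
  | .gc b => Sum.inr (coevalB M ρ b)
end

/-- Satisfaction of a formula in a structure of codatatypes. -/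
def CoSat (M : CoModel) (ρ : CoValn) : Fm → Prop
  | .eqB a b => coevalB M ρ a = coevalB M ρ b
  | .eqS a b => coevalS M ρ a = coevalS M ρ b
  | .eqD a b => coevalD M ρ a = coevalD M ρ b
  | .not φ => ¬ CoSat M ρ φ
  | .and φ ψ => CoSat M ρ φ ∧ CoSat M ρ ψ
  | .or φ ψ => CoSat M ρ φ ∨ CoSat M ρ ψ
  | .imp φ ψ => CoSat M ρ φ → CoSat M ρ ψ
  | .exB n φ => ∃ b : Bool, CoSat M { ρ with vb := Function.update ρ.vb n b } φ
  | .exS n φ => ∃ s : CoBits, CoSat M { ρ with vs := Function.update ρ.vs n s } φ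
  | .exD n φ => ∃ d : CoDummy, CoSat M { ρ with vd := Function.update ρ.vd n d } φ
  | .allB n φ => ∀ b : Bool, CoSat M { ρ with vb := Function.update ρ.vb n b } φ
  | .allS n φ => ∀ s : CoBits, CoSat M { ρ with vs := Function.update ρ.vs n s } φ
  | .allD n φ => ∀ d : CoDummy, CoSat M { ρ with vd := Function.update ρ.vd n d } φ

/-- Validity in the theory of codatatypes. -/
def ValidCo (φ : Fm) : Prop := ∀ (M : CoModel) (ρ : CoValn), CoSat M ρ φ

/-- Satisfiability in the theory of codatatypes. -/
def SatCo (φ : Fm) : Prop := ∃ (M : CoModel) (ρ : CoValn), CoSat M ρ φ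

mutual
/-- A Gödel numbering of `bool` terms. -/
def encB : TB → ℕ
  | .var n => Nat.pair 0 n
  | .tt => Nat.pair 1 0
  | .ff => Nat.pair 2 0
  | .selH t => Nat.pair 3 (encD t)
/-- A Gödel numbering of `bitstring` terms. -/
def encS : TS → ℕ
  | .var n => Nat.pair 0 n
  | .eps => Nat.pair 1 0
  | .b0 t => Nat.pair 2 (encS t)
  | .b1 t => Nat.pair 3 (encS t)
  | .selT0 t => Nat.pair 4 (encS t)
  | .selT1 t => Nat.pair 5 (encS t)
  | .selB1 t => Nat.pair 6 (encD t)
  | .selB2 t => Nat.pair 7 (encD t)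
/-- A Gödel numbering of `dummy` terms. -/
def encD : TD → ℕ
  | .var n => Nat.pair 0 n
  | .fc a b => Nat.pair 1 (Nat.pair (encS a) (encS b))
  | .gc b => Nat.pair 2 (encB b)
end

/-- A Gödel numbering of formulae. -/
def encF : Fm → ℕ
  | .eqB a b => Nat.pair 0 (Nat.pair (encB a) (encB b))
  | .eqS a b => Nat.pair 1 (Nat.pair (encS a) (encS b))
  | .eqD a b => Nat.pair 2 (Nat.pair (encD a) (encD b))
  | .not φ => Nat.pair 3 (encF φ)
  | .and φ ψ => Nat.pair 4 (Nat.pair (encF φ) (encF ψ))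
  | .or φ ψ => Nat.pair 5 (Nat.pair (encF φ) (encF ψ))
  | .imp φ ψ => Nat.pair 6 (Nat.pair (encF φ) (encF ψ))
  | .exB n φ => Nat.pair 7 (Nat.pair n (encF φ))
  | .exS n φ => Nat.pair 8 (Nat.pair n (encF φ))
  | .exD n φ => Nat.pair 9 (Nat.pair n (encF φ))
  | .allB n φ => Nat.pair 10 (Nat.pair n (encF φ))
  | .allS n φ => Nat.pair 11 (Nat.pair n (encF φ))
  | .allD n φ => Nat.pair 12 (Nat.pair n (encF φ))

mutual
/-- The (sorted) free variables of a `bool` term (`0 = bool`, `1 = bitstring`,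
`2 = dummy`). -/
def fvTB : TB → Finset (Fin 3 × ℕ)
  | .var n => {(0, n)}
  | .tt => ∅
  | .ff => ∅
  | .selH t => fvTD t
/-- The free variables of a `bitstring` term. -/
def fvTS : TS → Finset (Fin 3 × ℕ)
  | .var n => {(1, n)}
  | .eps => ∅
  | .b0 t => fvTS t
  | .b1 t => fvTS t
  | .selT0 t => fvTS t
  | .selT1 t => fvTS t
  | .selB1 t => fvTD t
  | .selB2 t => fvTD t
/-- The free variables of a `dummy` term. -/
def fvTD : TD → Finset (Fin 3 × ℕ)
  | .var n => {(2, n)}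
  | .fc a b => fvTS a ∪ fvTS b
  | .gc b => fvTB b
end

/-- The free variables of a formula. -/
def fvF : Fm → Finset (Fin 3 × ℕ)
  | .eqB a b => fvTB a ∪ fvTB b
  | .eqS a b => fvTS a ∪ fvTS b
  | .eqD a b => fvTD a ∪ fvTD b
  | .not φ => fvF φ
  | .and φ ψ => fvF φ ∪ fvF ψ
  | .or φ ψ => fvF φ ∪ fvF ψ
  | .imp φ ψ => fvF φ ∪ fvF ψ
  | .exB n φ => fvF φ \ {(0, n)}
  | .exS n φ => fvF φ \ {(1, n)}
  | .exD n φ => fvF φ \ {(2, n)}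
  | .allB n φ => fvF φ \ {(0, n)}
  | .allS n φ => fvF φ \ {(1, n)}
  | .allD n φ => fvF φ \ {(2, n)}

/-- A formula is a sentence if it has no free variables. -/
def Fm.Closed (φ : Fm) : Prop := fvF φ = ∅


/-!
The selector `h` of `dummy` is unspecified on values built with `f`, so the atom
`h(f(x, y)) = True` defines an arbitrary binary relation `R` on bit strings, which a formula can
use like a relation variable. Tagging the components of a 5-tuple by fixed prefixes of a common
bit string `t`, `R` codes a set of configurations (control state and four stacks) of a fixed
universal stack machine. The sentence saying that this set contains the initial configuration on
input `n`, is closed under the step function and contains no halting configuration is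
satisfiable iff the machine does not halt on `n`: the run itself gives a model, and every model
contains the run. Only injectivity and disjointness of the `bitstring` constructors are used, so
the argument is the same for finite strings and for streams.
-/

theorem Primrec.nat_bits : Primrec Nat.bits := by
  refine Primrec.nat_omega_rec' Nat.bits (m := id) (l := fun n => if n = 0 then [] else [n.div2])
    (g := fun n bs => some (if n = 0 then [] else n.bodd :: bs.headI)) Primrec.id ?_ ?_ ?_ ?_
  · exact Primrec.ite (Primrec.eq.comp Primrec.id (Primrec.const 0)) (Primrec.const [])
      (Primrec.list_cons.comp Primrec.nat_div2 (Primrec.const []))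
  · exact Primrec.option_some.comp (Primrec.ite (Primrec.eq.comp Primrec.fst (Primrec.const 0))
      (Primrec.const []) (Primrec.list_cons.comp (Primrec.nat_bodd.comp Primrec.fst)
        (Primrec.list_headI.comp Primrec.snd)))
  · intro n n' h
    split_ifs at h with hn
    · simp at h
    · rw [List.mem_singleton.1 h, Nat.div2_val]
      exact Nat.div_lt_self (Nat.pos_of_ne_zero hn) one_lt_two
  · intro n
    split_ifs with hn
    · simp [hn]
    · have hbit : n.div2 = 0 → n.bodd = true := fun h0 => by
        have := Nat.bodd_add_div2 n
        cases hb : n.bodd <;> simp_all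
      conv_rhs => rw [← Nat.bit_bodd_div2 n, Nat.bits_append_bit _ _ hbit]
      rfl

open Turing PartrecToTM2 in
theorem trNat_eq_map_bits (n : ℕ) : trNat n = n.bits.map fun b => cond b Γ'.bit1 Γ'.bit0 := by
  induction n using Nat.binaryRec' with
  | zero => simp
  | bit b n hb ih =>
    rw [Nat.bits_append_bit _ _ hb, List.map_cons, ← ih, trNat, ← Num.ofNat'_eq, Num.ofNat'_bit,
      trNat, ← Num.ofNat'_eq]
    rcases b <;> rcases h : Num.ofNat' n with _ | p
    · have hn : ((n : Num) : ℕ) = 0 := by rw [← Num.ofNat'_eq, h]; rfl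
      simp at hn
      simp [hn] at hb
    all_goals rfl

namespace BitRel

structure ConsAlg (α : Type) where
  nil : α
  cons : Bool → α → α
  cons_inj : ∀ {b x b' x'}, cons b x = cons b' x' → b = b' ∧ x = x'
  cons_ne_nil : ∀ b x, cons b x ≠ nil

inductive Term : Type
  | var (n : ℕ)
  | nil
  | cons (b : Bool) (t : Term)

inductive Formula : Type
  | rel (a b : Term)
  | eq (a b : Term)
  | fls
  | and (φ ψ : Formula)
  | or (φ ψ : Formula)
  | imp (φ ψ : Formula)
  | ex (n : ℕ) (φ : Formula)
  | all (n : ℕ) (φ : Formula)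

def Term.ofBits (l : List Bool) (t : Term) : Term := l.foldr .cons t

def Term.fv : Term → Finset ℕ
  | .var n => {n}
  | .nil => ∅
  | .cons _ t => t.fv

def Formula.fv : Formula → Finset ℕ
  | .rel a b | .eq a b => a.fv ∪ b.fv
  | .fls => ∅
  | .and φ ψ | .or φ ψ | .imp φ ψ => φ.fv ∪ ψ.fv
  | .ex n φ | .all n φ => φ.fv \ {n}

def Formula.bigAnd (l : List Formula) : Formula := l.foldr .and (.eq .nil .nil)

def Formula.bigOr (l : List Formula) : Formula := l.foldr .or .fls

@[simp]
theorem Term.fv_ofBits (l : List Bool) (t : Term) : (Term.ofBits l t).fv = t.fv := by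
  induction l with
  | nil => rfl
  | cons b l ih => exact ih

namespace Formula

theorem fv_bigAnd_subset {l : List Formula} {s : Finset ℕ} (h : ∀ φ ∈ l, φ.fv ⊆ s) :
    (bigAnd l).fv ⊆ s := by
  induction l with
  | nil => simp [bigAnd, fv, Term.fv]
  | cons φ l ih =>
    simp only [List.mem_cons, forall_eq_or_imp] at h
    exact Finset.union_subset h.1 (ih h.2)

theorem fv_bigOr_subset {l : List Formula} {s : Finset ℕ} (h : ∀ φ ∈ l, φ.fv ⊆ s) :
    (bigOr l).fv ⊆ s := by
  induction l with
  | nil => simp [bigOr, fv]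
  | cons φ l ih =>
    simp only [List.mem_cons, forall_eq_or_imp] at h
    exact Finset.union_subset h.1 (ih h.2)

theorem fv_ex_subset {φ : Formula} {m : ℕ} (h : φ.fv ⊆ Finset.range (m + 1)) :
    (ex m φ).fv ⊆ Finset.range m := by
  intro x hx
  simp only [fv, Finset.mem_sdiff, Finset.mem_singleton] at hx
  have := Finset.mem_range.1 (h hx.1)
  exact Finset.mem_range.2 (by omega)

theorem fv_all_subset {φ : Formula} {m : ℕ} (h : φ.fv ⊆ Finset.range (m + 1)) :
    (all m φ).fv ⊆ Finset.range m :=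
  fv_ex_subset (φ := φ) h

end Formula

namespace ConsAlg

variable {α : Type}

def ofBits (A : ConsAlg α) (l : List Bool) (x : α) : α := l.foldr A.cons x

def eval (A : ConsAlg α) (ρ : ℕ → α) : Term → α
  | .var n => ρ n
  | .nil => A.nil
  | .cons b t => A.cons b (A.eval ρ t)

def Holds (A : ConsAlg α) (R : α → α → Prop) (ρ : ℕ → α) : Formula → Prop
  | .rel a b => R (A.eval ρ a) (A.eval ρ b)
  | .eq a b => A.eval ρ a = A.eval ρ b
  | .fls => False
  | .and φ ψ => A.Holds R ρ φ ∧ A.Holds R ρ ψ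
  | .or φ ψ => A.Holds R ρ φ ∨ A.Holds R ρ ψ
  | .imp φ ψ => A.Holds R ρ φ → A.Holds R ρ ψ
  | .ex n φ => ∃ x, A.Holds R (Function.update ρ n x) φ
  | .all n φ => ∀ x, A.Holds R (Function.update ρ n x) φ

theorem ofBits_inj (A : ConsAlg α) {l l' : List Bool} {x x' : α} (hl : l.length = l'.length)
    (h : A.ofBits l x = A.ofBits l' x') : l = l' ∧ x = x' := by
  induction l generalizing l' with
  | nil => cases l' <;> simp_all [ofBits]
  | cons b l ih =>
    obtain - | ⟨b', l'⟩ := l'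
    · simp at hl
    · obtain ⟨rfl, htail⟩ := A.cons_inj h
      obtain ⟨rfl, rfl⟩ := ih (by simpa using hl) htail
      exact ⟨rfl, rfl⟩

@[simp]
theorem eval_ofBits (A : ConsAlg α) (ρ : ℕ → α) (l : List Bool) (t : Term) :
    A.eval ρ (.ofBits l t) = A.ofBits l (A.eval ρ t) := by
  induction l with
  | nil => rfl
  | cons b l ih => exact congrArg (A.cons b) ih

theorem eval_update_of_fv_subset (A : ConsAlg α) {ρ : ℕ → α} {m : ℕ} (x : α) {t : Term}
    (h : t.fv ⊆ Finset.range m) : A.eval (Function.update ρ m x) t = A.eval ρ t := by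
  induction t with
  | var n =>
    have : n < m := Finset.mem_range.1 (h (by simp [Term.fv]))
    exact Function.update_of_ne (by omega) _ _
  | nil => rfl
  | cons b t ih => exact congrArg (A.cons b) (ih h)

theorem holds_bigAnd (A : ConsAlg α) {R : α → α → Prop} {ρ : ℕ → α} {l : List Formula} :
    A.Holds R ρ (.bigAnd l) ↔ ∀ φ ∈ l, A.Holds R ρ φ := by
  induction l with
  | nil => simp [Formula.bigAnd, Holds]
  | cons φ l ih => simp [Formula.bigAnd, Holds, ← ih]

theorem holds_bigOr (A : ConsAlg α) {R : α → α → Prop} {ρ : ℕ → α} {l : List Formula} :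
    A.Holds R ρ (.bigOr l) ↔ ∃ φ ∈ l, A.Holds R ρ φ := by
  induction l with
  | nil => simp [Formula.bigOr, Holds]
  | cons φ l ih => simp [Formula.bigOr, Holds, ← ih]

end ConsAlg

def Term.toTS : Term → TS
  | .var n => .var n
  | .nil => .eps
  | .cons false t => .b0 t.toTS
  | .cons true t => .b1 t.toTS

def Formula.toFm : Formula → Fm
  | .rel a b => .eqB (.selH (.fc a.toTS b.toTS)) .tt
  | .eq a b => .eqS a.toTS b.toTS
  | .fls => .not (.eqS .eps .eps)
  | .and φ ψ => .and φ.toFm ψ.toFm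
  | .or φ ψ => .or φ.toFm ψ.toFm
  | .imp φ ψ => .imp φ.toFm ψ.toFm
  | .ex n φ => .exS n φ.toFm
  | .all n φ => .allS n φ.toFm

theorem fvTS_toTS (t : Term) : fvTS t.toTS = t.fv.image ((1 : Fin 3), ·) := by
  induction t with
  | var n => simp [Term.toTS, fvTS, Term.fv]
  | nil => simp [Term.toTS, fvTS, Term.fv]
  | cons b t ih => cases b <;> simpa [Term.toTS, fvTS, Term.fv] using ih

theorem fvF_toFm (φ : Formula) : fvF φ.toFm = φ.fv.image ((1 : Fin 3), ·) := by
  have hinj : Function.Injective (((1 : Fin 3), ·) : ℕ → Fin 3 × ℕ) := fun _ _ h =>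
    (Prod.ext_iff.1 h).2
  induction φ with
  | rel a b => simp [Formula.toFm, fvF, fvTB, fvTD, fvTS_toTS, Formula.fv, Finset.image_union]
  | eq a b => simp [Formula.toFm, fvF, fvTS_toTS, Formula.fv, Finset.image_union]
  | fls => simp [Formula.toFm, fvF, fvTS, Formula.fv]
  | and φ ψ ihφ ihψ | or φ ψ ihφ ihψ | imp φ ψ ihφ ihψ =>
    simp [Formula.toFm, fvF, Formula.fv, ihφ, ihψ, Finset.image_union]
  | ex n φ ih | all n φ ih =>
    simp [Formula.toFm, fvF, Formula.fv, ih, Finset.image_sdiff _ _ hinj]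

theorem Formula.closed_toFm {φ : Formula} (h : φ.fv = ∅) : φ.toFm.Closed := by
  simp [Fm.Closed, fvF_toFm, h]

def listAlg : ConsAlg Bits where
  nil := []
  cons := List.cons
  cons_inj h := List.cons_eq_cons.1 h
  cons_ne_nil := List.cons_ne_nil

theorem CoBits.cons_inj {b b' : Bool} {t t' : CoBits} (h : CoBits.cons b t = CoBits.cons b' t') :
    b = b' ∧ t = t' := by
  refine ⟨by simpa [CoBits.cons] using congrArg (fun s : CoBits => s.1 0) h,
    Subtype.ext (funext fun n => ?_)⟩
  simpa [CoBits.cons] using congrArg (fun s : CoBits => s.1 (n + 1)) h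

theorem CoBits.cons_ne_nil (b : Bool) (t : CoBits) : CoBits.cons b t ≠ CoBits.nil := fun h => by
  simpa [CoBits.cons, CoBits.nil] using congrArg (fun s : CoBits => s.1 0) h

def streamAlg : ConsAlg CoBits where
  nil := CoBits.nil
  cons := CoBits.cons
  cons_inj := CoBits.cons_inj
  cons_ne_nil := CoBits.cons_ne_nil

end BitRel

open BitRel

def Model.rel (M : Model) (x y : Bits) : Prop := M.sh (.inl (x, y)) = true

def CoModel.rel (M : CoModel) (x y : CoBits) : Prop := M.sh (.inl (x, y)) = true

theorem evalS_toTS (M : Model) (ρ : Valn) (t : Term) :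
    evalS M ρ t.toTS = listAlg.eval ρ.vs t := by
  induction t with
  | var n => rfl
  | nil => rfl
  | cons b t ih => cases b <;> simp only [Term.toTS, evalS, ih] <;> rfl

theorem coevalS_toTS (M : CoModel) (ρ : CoValn) (t : Term) :
    coevalS M ρ t.toTS = streamAlg.eval ρ.vs t := by
  induction t with
  | var n => rfl
  | nil => rfl
  | cons b t ih => cases b <;> simp only [Term.toTS, coevalS, ih] <;> rfl

theorem sat_toFm (M : Model) (ρ : Valn) (φ : Formula) :
    Sat M ρ φ.toFm ↔ listAlg.Holds M.rel ρ.vs φ := by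
  induction φ generalizing ρ with
  | rel a b => simp [Formula.toFm, Sat, evalB, evalD, evalS_toTS, ConsAlg.Holds, Model.rel]
  | eq a b => simp [Formula.toFm, Sat, evalS_toTS, ConsAlg.Holds]
  | fls => simp [Formula.toFm, Sat, ConsAlg.Holds]
  | and φ ψ ihφ ihψ | or φ ψ ihφ ihψ | imp φ ψ ihφ ihψ =>
    simp [Formula.toFm, Sat, ConsAlg.Holds, ihφ, ihψ]
  | ex n φ ih | all n φ ih => simp [Formula.toFm, Sat, ConsAlg.Holds, ih]

theorem coSat_toFm (M : CoModel) (ρ : CoValn) (φ : Formula) :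
    CoSat M ρ φ.toFm ↔ streamAlg.Holds M.rel ρ.vs φ := by
  induction φ generalizing ρ with
  | rel a b =>
    simp [Formula.toFm, CoSat, coevalB, coevalD, coevalS_toTS, ConsAlg.Holds, CoModel.rel]
  | eq a b => simp [Formula.toFm, CoSat, coevalS_toTS, ConsAlg.Holds]
  | fls => simp [Formula.toFm, CoSat, ConsAlg.Holds]
  | and φ ψ ihφ ihψ | or φ ψ ihφ ihψ | imp φ ψ ihφ ihψ =>
    simp [Formula.toFm, CoSat, ConsAlg.Holds, ihφ, ihψ]
  | ex n φ ih | all n φ ih => simp [Formula.toFm, CoSat, ConsAlg.Holds, ih]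

open Classical in
noncomputable def Model.ofRel (R : Bits → Bits → Prop) : Model where
  t0 := List.tail
  t1 := List.tail
  s1 := Sum.elim Prod.fst fun _ => []
  s2 := Sum.elim Prod.snd fun _ => []
  sh := Sum.elim (fun p => decide (R p.1 p.2)) id
  ht0 _ := rfl
  ht1 _ := rfl
  hs1 _ _ := rfl
  hs2 _ _ := rfl
  hsh _ := rfl

def CoBits.tail (t : CoBits) : CoBits := ⟨fun n => t.1 (n + 1), fun n => t.2 (n + 1)⟩

open Classical in
noncomputable def CoModel.ofRel (R : CoBits → CoBits → Prop) : CoModel where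
  t0 := CoBits.tail
  t1 := CoBits.tail
  s1 := Sum.elim Prod.fst fun _ => CoBits.nil
  s2 := Sum.elim Prod.snd fun _ => CoBits.nil
  sh := Sum.elim (fun p => decide (R p.1 p.2)) id
  ht0 _ := rfl
  ht1 _ := rfl
  hs1 _ _ := rfl
  hs2 _ _ := rfl
  hsh _ := rfl

theorem Model.rel_ofRel (R : Bits → Bits → Prop) : (Model.ofRel R).rel = R := by
  ext x y
  simp [Model.ofRel, Model.rel]

theorem CoModel.rel_ofRel (R : CoBits → CoBits → Prop) : (CoModel.ofRel R).rel = R := by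
  ext x y
  simp [CoModel.ofRel, CoModel.rel]

theorem satData_toFm_iff (φ : Formula) :
    SatData φ.toFm ↔ ∃ R ρ, listAlg.Holds R ρ φ := by
  simp only [SatData, sat_toFm]
  refine ⟨fun ⟨M, ρ, h⟩ => ⟨_, _, h⟩, fun ⟨R, ρ, h⟩ =>
    ⟨Model.ofRel R, ⟨fun _ => false, ρ, fun _ => .inr false⟩, ?_⟩⟩
  rwa [Model.rel_ofRel]

theorem satCo_toFm_iff (φ : Formula) :
    SatCo φ.toFm ↔ ∃ R ρ, streamAlg.Holds R ρ φ := by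
  simp only [SatCo, coSat_toFm]
  refine ⟨fun ⟨M, ρ, h⟩ => ⟨_, _, h⟩, fun ⟨R, ρ, h⟩ =>
    ⟨CoModel.ofRel R, ⟨fun _ => false, ρ, fun _ => .inr false⟩, ?_⟩⟩
  rwa [CoModel.rel_ofRel]

theorem validData_not_iff (φ : Fm) : ValidData (.not φ) ↔ ¬SatData φ := by
  simp [ValidData, SatData, Sat]

theorem validCo_not_iff (φ : Fm) : ValidCo (.not φ) ↔ ¬SatCo φ := by
  simp [ValidCo, SatCo, CoSat]

namespace UniversalTM

open Turing PartrecToTM2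

theorem exists_code : ∃ U : ToPartrec.Code, ∀ n : ℕ,
    (U.eval [n]).Dom ↔ ((Denumerable.ofNat Nat.Partrec.Code n.unpair.1).eval n.unpair.2).Dom := by
  have hpart : Partrec fun n : ℕ =>
      (Denumerable.ofNat Nat.Partrec.Code n.unpair.1).eval n.unpair.2 :=
    Nat.Partrec.Code.eval_part.comp
      ((Computable.ofNat _).comp (Computable.fst.comp Computable.unpair))
      (Computable.snd.comp Computable.unpair)
  obtain ⟨U, hU⟩ := ToPartrec.Code.exists_code (Nat.Partrec'.part_iff₁.2 hpart)
  exact ⟨U, fun n => by simpa [List.Vector.head] using congrArg Part.Dom (hU ⟨[n], rfl⟩)⟩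

noncomputable def U : ToPartrec.Code := exists_code.choose

def Halts (n : ℕ) : Prop := (StateTransition.eval (TM2.step tr) (init U [n])).Dom

theorem halts_iff (n : ℕ) :
    Halts n ↔ ((Denumerable.ofNat Nat.Partrec.Code n.unpair.1).eval n.unpair.2).Dom := by
  simp only [Halts, tr_eval]
  exact exists_code.choose_spec n

theorem not_computablePred_halts : ¬ComputablePred Halts := fun h =>
  ComputablePred.halting_problem 0 <| ComputablePred.computable_of_manyOneReducible
    ⟨fun c => Nat.pair (Encodable.encode c) 0,
      (Primrec₂.natPair.comp Primrec.encode (Primrec.const 0)).to_comp, fun c => by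
        simp [halts_iff]⟩ h

noncomputable def support : Finset Λ' := codeSupp U Cont'.halt

/-- `tr_supports` is stated for the `Inhabited Λ'` instance whose default is the start label. -/
theorem step_mem_support {c c' : Cfg'} (h : TM2.step tr c = some c')
    (hc : c.l ∈ Finset.insertNone support) : c'.l ∈ Finset.insertNone support :=
  @TM2.step_supports _ _ _ _ ⟨trNormal U Cont'.halt⟩ _ tr _ (tr_supports U Cont'.halt) _ _ h hc

theorem init_mem_support (n : ℕ) : (init U [n]).l ∈ Finset.insertNone support :=
  Finset.some_mem_insertNone.2 (codeSupp_self _ _ (trStmts₁_self _))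

noncomputable def run (n : ℕ) : ℕ → Option Cfg'
  | 0 => some (init U [n])
  | i + 1 => (run n i).bind (TM2.step tr)

theorem reaches_of_run {n i : ℕ} {c : Cfg'} (h : run n i = some c) :
    StateTransition.Reaches (TM2.step tr) (init U [n]) c := by
  induction i generalizing c with
  | zero => cases h; exact .refl
  | succ i ih =>
    obtain ⟨c₀, h₀, hstep⟩ := Option.bind_eq_some_iff.1 h
    exact (ih h₀).tail hstep

theorem halts_of_run {n i : ℕ} {v : Option Γ'} {stk : K' → List Γ'}
    (h : run n i = some ⟨none, v, stk⟩) : Halts n :=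
  Part.dom_iff_mem.2 ⟨_, StateTransition.mem_eval.2 ⟨reaches_of_run h, rfl⟩⟩

theorem run_succ {n i : ℕ} {q : Λ'} {v : Option Γ'} {stk : K' → List Γ'}
    (h : run n i = some ⟨some q, v, stk⟩) :
    run n (i + 1) = some (TM2.stepAux (tr q) v stk) := by
  rw [run, h]
  rfl

end UniversalTM

namespace BitRel

open Turing PartrecToTM2 UniversalTM Formula

def symBits : Γ' → List Bool
  | .consₗ => [false, false]
  | .cons => [false, true]
  | .bit0 => [true, false]
  | .bit1 => [true, true]

/-- Tags the five components of a configuration: its control state (`none`) and its stacks. -/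
def tagBits : Option K' → List Bool
  | none => [false, false, false]
  | some .main => [false, false, true]
  | some .rev => [false, true, false]
  | some .aux => [false, true, true]
  | some .stack => [true, false, false]

theorem symBits_inj {γ γ' : Γ'} (h : symBits γ = symBits γ') : γ = γ' := by
  revert γ γ'; decide

theorem tagBits_inj {o o' : Option K'} (h : tagBits o = tagBits o') : o = o' := by
  rcases o with _ | ⟨_ | _ | _ | _⟩ <;> rcases o' with _ | ⟨_ | _ | _ | _⟩ <;>
    first | rfl | simp [tagBits] at h

def allSlots : List (Option K') := [none, some .main, some .rev, some .aux, some .stack]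

theorem mem_allSlots (o : Option K') : o ∈ allSlots := by
  rcases o with _ | ⟨_ | _ | _ | _⟩ <;> simp [allSlots]

noncomputable def labels : Finset (Λ' × Option Γ') := support ×ˢ Finset.univ

noncomputable def labelIdx (p : Λ' × Option Γ') : ℕ := labels.toList.idxOf p

theorem labelIdx_inj {p p' : Λ' × Option Γ'} (hp : p.1 ∈ support)
    (h : labelIdx p = labelIdx p') : p = p' :=
  (List.idxOf_inj (by simpa [labels] using hp)).1 h

def pushTm (γ : Γ') (t : Term) : Term := .ofBits (symBits γ) t

def stackTm (L : List Γ') : Term := L.foldr pushTm .nil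

def numTm (i : ℕ) : Term := .ofBits (List.replicate i false) .nil

def slotTm (o : Option K') (t : Term) : Term := .ofBits (tagBits o) t

namespace ConsAlg

variable {α : Type}

def push (A : ConsAlg α) (γ : Γ') (x : α) : α := A.ofBits (symBits γ) x

def emb (A : ConsAlg α) (L : List Γ') : α := L.foldr A.push A.nil

def num (A : ConsAlg α) (i : ℕ) : α := A.ofBits (List.replicate i false) A.nil

def slot (A : ConsAlg α) (o : Option K') (x : α) : α := A.ofBits (tagBits o) x

theorem push_inj (A : ConsAlg α) {γ γ' : Γ'} {x x' : α} (h : A.push γ x = A.push γ' x') :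
    γ = γ' ∧ x = x' := by
  obtain ⟨hγ, hx⟩ := A.ofBits_inj (by cases γ <;> cases γ' <;> rfl) h
  exact ⟨symBits_inj hγ, hx⟩

theorem push_ne_nil (A : ConsAlg α) (γ : Γ') (x : α) : A.push γ x ≠ A.nil := by
  cases γ <;> exact A.cons_ne_nil _ _

theorem slot_inj (A : ConsAlg α) {o o' : Option K'} {x x' : α} (h : A.slot o x = A.slot o' x') :
    o = o' ∧ x = x' := by
  obtain ⟨ho, hx⟩ := A.ofBits_inj (by rcases o with _ | ⟨_ | _ | _ | _⟩ <;>
    rcases o' with _ | ⟨_ | _ | _ | _⟩ <;> rfl) h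
  exact ⟨tagBits_inj ho, hx⟩

theorem num_inj (A : ConsAlg α) {i j : ℕ} (h : A.num i = A.num j) : i = j := by
  induction i generalizing j with
  | zero => cases j; rfl; exact absurd h.symm (A.cons_ne_nil _ _)
  | succ i ih =>
    cases j with
    | zero => exact absurd h (A.cons_ne_nil _ _)
    | succ j => exact congrArg (· + 1) (ih (A.cons_inj h).2)

theorem push_eq_push_iff (A : ConsAlg α) {γ γ' : Γ'} {x x' : α} :
    A.push γ x = A.push γ' x' ↔ γ = γ' ∧ x = x' :=
  ⟨A.push_inj, fun ⟨hγ, hx⟩ => hγ ▸ hx ▸ rfl⟩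

@[simp]
theorem emb_nil (A : ConsAlg α) : A.emb [] = A.nil := rfl

@[simp]
theorem emb_cons (A : ConsAlg α) (γ : Γ') (L : List Γ') : A.emb (γ :: L) = A.push γ (A.emb L) :=
  rfl

@[simp]
theorem eval_pushTm (A : ConsAlg α) (ρ : ℕ → α) (γ : Γ') (t : Term) :
    A.eval ρ (pushTm γ t) = A.push γ (A.eval ρ t) :=
  A.eval_ofBits ρ _ t

@[simp]
theorem eval_stackTm (A : ConsAlg α) (ρ : ℕ → α) (L : List Γ') :
    A.eval ρ (stackTm L) = A.emb L := by
  induction L with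
  | nil => rfl
  | cons γ L ih => simp [stackTm, ← ih]

end ConsAlg

/-- Case analysis on the stack denoted by `t`, binding its tail (`ε` if it is empty) to `m`. -/
noncomputable def stackCases (t : Term) (m : ℕ) (F : Option Γ' → Formula) : Formula :=
  .or (.ex m (.and (.eq t .nil) (.and (.eq (.var m) .nil) (F none))))
    (bigOr ((Finset.univ : Finset Γ').toList.map fun γ =>
      .ex m (.and (.eq t (pushTm γ (.var m))) (F (some γ)))))

def cfgFm (i : ℕ) (S : K' → Term) (m : ℕ) : Formula :=
  .ex m (bigAnd (allSlots.map fun o => .rel (slotTm o (.var m)) (o.elim (numTm i) S)))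

/-- The formula saying that executing `q` from the stacks denoted by `S` (with the variables
below `m` in use) leads to a configuration that is not halting and belongs to the set coded by
the relation. -/
noncomputable def compile : Stmt' → Option Γ' → (K' → Term) → ℕ → Formula
  | .push k f q, v, S, m => compile q v (Function.update S k (pushTm (f v) (S k))) m
  | .peek k f q, v, S, m => stackCases (S k) m fun o => compile q (f v o) S (m + 1)
  | .pop k f q, v, S, m =>
    stackCases (S k) m fun o => compile q (f v o) (Function.update S k (.var m)) (m + 1)
  | .load a q, v, S, m => compile q (a v) S m
  | .branch f q₁ q₂, v, S, m => cond (f v) (compile q₁ v S m) (compile q₂ v S m)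
  | .goto f, v, S, m => cfgFm (labelIdx (f v, v)) S m
  | .halt, _, _, _ => .fls

theorem subset_range_succ {s : Finset ℕ} {m : ℕ} (h : s ⊆ Finset.range m) :
    s ⊆ Finset.range (m + 1) :=
  h.trans (Finset.range_subset_range.2 m.le_succ)

theorem fv_stackCases_subset {t : Term} {m : ℕ} {F : Option Γ' → Formula}
    (ht : t.fv ⊆ Finset.range m) (hF : ∀ o, (F o).fv ⊆ Finset.range (m + 1)) :
    (stackCases t m F).fv ⊆ Finset.range m := by
  refine Finset.union_subset (fv_ex_subset ?_) (fv_bigOr_subset ?_)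
  · simp only [Formula.fv, Term.fv, Finset.union_empty]
    refine Finset.union_subset (subset_range_succ ht) (Finset.union_subset ?_ (hF none))
    simp
  · simp only [List.mem_map]
    rintro _ ⟨γ, -, rfl⟩
    refine fv_ex_subset (Finset.union_subset (Finset.union_subset (subset_range_succ ht) ?_) (hF _))
    simp [pushTm, Term.fv]

theorem fv_cfgFm_subset {i : ℕ} {S : K' → Term} {m : ℕ} (hS : ∀ k, (S k).fv ⊆ Finset.range m) :
    (cfgFm i S m).fv ⊆ Finset.range m := by
  refine fv_ex_subset (fv_bigAnd_subset ?_)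
  simp only [List.mem_map]
  rintro _ ⟨o, -, rfl⟩
  refine Finset.union_subset (by simp [slotTm, Term.fv]) ?_
  rcases o with _ | k
  · simp [numTm, Term.fv]
  · exact subset_range_succ (hS k)

theorem fv_update_subset {S : K' → Term} {m : ℕ} (hS : ∀ k, (S k).fv ⊆ Finset.range m)
    {k : K'} {t : Term} (ht : t.fv ⊆ Finset.range m) (k' : K') :
    (Function.update S k t k').fv ⊆ Finset.range m := by
  rw [Function.update_apply]
  split_ifs
  exacts [ht, hS k']

theorem fv_compile_subset (q : Stmt') {v : Option Γ'} {S : K' → Term} {m : ℕ}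
    (hS : ∀ k, (S k).fv ⊆ Finset.range m) : (compile q v S m).fv ⊆ Finset.range m := by
  induction q generalizing v S m with
  | push k f q ih => exact ih (fv_update_subset hS (by simpa [pushTm] using hS k))
  | peek k f q ih =>
    exact fv_stackCases_subset (hS k) fun o => ih fun k' => subset_range_succ (hS k')
  | pop k f q ih =>
    refine fv_stackCases_subset (hS k) fun o =>
      ih (fv_update_subset (fun k' => subset_range_succ (hS k')) ?_)
    simp [Term.fv]
  | load a q ih => exact ih hS
  | branch f q₁ q₂ ih₁ ih₂ => rw [compile]; cases f v; exacts [ih₂ hS, ih₁ hS]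
  | goto f => exact fv_cfgFm_subset hS
  | halt => simp [compile, Formula.fv]

namespace ConsAlg

variable {α : Type}

def TupleIn (A : ConsAlg α) (R : α → α → Prop) (x : Option K' → α) : Prop :=
  ∃ t, ∀ o, R (A.slot o t) (x o)

noncomputable def cfgTuple (A : ConsAlg α) (q : Λ') (v : Option Γ') (stk : K' → List Γ') :
    Option K' → α :=
  fun o => o.elim (A.num (labelIdx (q, v))) fun k => A.emb (stk k)

noncomputable def Live (A : ConsAlg α) (R : α → α → Prop) (c : Cfg') : Prop :=
  ∃ q, c.l = some q ∧ A.TupleIn R (A.cfgTuple q c.var c.stk)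

theorem live_some_iff (A : ConsAlg α) {R : α → α → Prop} {q : Λ'} {v : Option Γ'}
    {stk : K' → List Γ'} : A.Live R ⟨some q, v, stk⟩ ↔ A.TupleIn R (A.cfgTuple q v stk) :=
  ⟨fun ⟨_, hq, h⟩ => Option.some.inj hq ▸ h, fun h => ⟨q, rfl, h⟩⟩

theorem holds_stackCases (A : ConsAlg α) {R : α → α → Prop} {ρ : ℕ → α} {t : Term} {m : ℕ}
    {F : Option Γ' → Formula} {L : List Γ'} (ht : A.eval ρ t = A.emb L)
    (hfv : t.fv ⊆ Finset.range m) :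
    A.Holds R ρ (stackCases t m F) ↔
      A.Holds R (Function.update ρ m (A.emb L.tail)) (F L.head?) := by
  have heval : ∀ x, A.eval (Function.update ρ m x) t = A.emb L := fun x =>
    (A.eval_update_of_fv_subset x hfv).trans ht
  simp only [stackCases, Holds, A.holds_bigOr, List.mem_map, Finset.mem_toList,
    Finset.mem_univ, true_and, exists_exists_eq_and, heval]
  rcases L with _ | ⟨γ, L⟩
  · simp [eval, (A.push_ne_nil _ _).symm]
  · simp [eval, A.push_ne_nil, A.push_eq_push_iff]

theorem holds_cfgFm (A : ConsAlg α) {R : α → α → Prop} {ρ : ℕ → α} {i : ℕ} {S : K' → Term}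
    {m : ℕ} (hS : ∀ k, (S k).fv ⊆ Finset.range m) :
    A.Holds R ρ (cfgFm i S m) ↔
      A.TupleIn R (fun o => o.elim (A.num i) fun k => A.eval ρ (S k)) := by
  simp only [cfgFm, Holds, A.holds_bigAnd, List.mem_map, forall_exists_index, and_imp,
    forall_apply_eq_imp_iff₂, TupleIn]
  refine exists_congr fun x => forall_congr' fun o => ?_
  simp only [mem_allSlots, true_implies, slotTm, numTm, eval_ofBits, eval, Function.update_self]
  rcases o with _ | k
  · simp [eval, slot, num]
  · simp [A.eval_update_of_fv_subset x (hS k), slot]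

theorem eval_update_stacks (A : ConsAlg α) {ρ : ℕ → α} {S : K' → Term} {stk : K' → List Γ'}
    (hS : ∀ k, A.eval ρ (S k) = A.emb (stk k)) {k : K'} {t : Term} {L : List Γ'}
    (ht : A.eval ρ t = A.emb L) (k' : K') :
    A.eval ρ (Function.update S k t k') = A.emb (Function.update stk k L k') := by
  rw [Function.update_apply, Function.update_apply]
  split_ifs
  exacts [ht, hS k']

theorem holds_compile (A : ConsAlg α) (R : α → α → Prop) (q : Stmt') {v : Option Γ'}
    {S : K' → Term} {m : ℕ} {ρ : ℕ → α} {stk : K' → List Γ'}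
    (hS : ∀ k, A.eval ρ (S k) = A.emb (stk k)) (hm : ∀ k, (S k).fv ⊆ Finset.range m) :
    A.Holds R ρ (compile q v S m) ↔ A.Live R (TM2.stepAux q v stk) := by
  induction q generalizing v S m ρ stk with
  | push k f q ih =>
    refine ih (A.eval_update_stacks hS (by simp [hS k])) (fv_update_subset hm ?_)
    simpa [pushTm] using hm k
  | peek k f q ih =>
    rw [compile, A.holds_stackCases (hS k) (hm k)]
    exact ih (fun k' => (A.eval_update_of_fv_subset _ (hm k')).trans (hS k'))
      fun k' => subset_range_succ (hm k')
  | pop k f q ih =>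
    rw [compile, A.holds_stackCases (hS k) (hm k)]
    refine ih (A.eval_update_stacks
      (fun k' => (A.eval_update_of_fv_subset _ (hm k')).trans (hS k')) (by simp [eval]))
      (fv_update_subset (fun k' => subset_range_succ (hm k')) (by simp [Term.fv]))
  | load a q ih => exact ih hS hm
  | branch f q₁ q₂ ih₁ ih₂ =>
    rw [compile, TM2.stepAux]
    cases f v
    exacts [ih₂ hS hm, ih₁ hS hm]
  | goto f =>
    rw [compile, A.holds_cfgFm hm, TM2.stepAux, live_some_iff]
    simp only [hS]
    rfl
  | halt => simp [compile, Holds, Live, TM2.stepAux]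

end ConsAlg

@[simp]
theorem fv_stackTm (L : List Γ') : (stackTm L).fv = ∅ := by
  induction L with
  | nil => rfl
  | cons γ L ih => simpa [stackTm, pushTm] using ih

def stackVars : K' → Term
  | .main => .var 0
  | .rev => .var 1
  | .aux => .var 2
  | .stack => .var 3

def assignStacks {α : Type} (ρ : ℕ → α) (s : K' → α) : ℕ → α :=
  Function.update (Function.update (Function.update (Function.update ρ
    0 (s .main)) 1 (s .rev)) 2 (s .aux)) 3 (s .stack)

theorem fv_stackVars_subset (k : K') : (stackVars k).fv ⊆ Finset.range 4 := by
  cases k <;> simp [stackVars, Term.fv]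

theorem eval_stackVars {α : Type} (A : ConsAlg α) (ρ : ℕ → α) (s : K' → α) (k : K') :
    A.eval (assignStacks ρ s) (stackVars k) = s k := by
  cases k <;> simp [stackVars, assignStacks, ConsAlg.eval]

noncomputable def ruleFm (p : Λ' × Option Γ') : Formula :=
  .imp (cfgFm (labelIdx p) stackVars 4) (compile (tr p.1) p.2 stackVars 4)

noncomputable def closureFm : Formula :=
  .all 0 <| .all 1 <| .all 2 <| .all 3 <| bigAnd (labels.toList.map ruleFm)

def inputTm (n : ℕ) : Term := stackTm (trList [n])

def initStacks : K' → Term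
  | .main => .var 0
  | _ => .nil

/-- The input is bound to a variable right below the root, so that the Gödel number of the
formula is a simple function of that of the input. -/
noncomputable def initFm (n : ℕ) : Formula :=
  .ex 0 <| .and (.eq (.var 0) (inputTm n))
    (cfgFm (labelIdx (trNormal U Cont'.halt, none)) initStacks 1)

noncomputable def nonhaltFm (n : ℕ) : Formula := .and (initFm n) closureFm

theorem fv_nonhaltFm (n : ℕ) : (nonhaltFm n).fv = ∅ := by
  have hinit : (initFm n).fv ⊆ Finset.range 0 := by
    refine fv_ex_subset (Finset.union_subset ?_ (fv_cfgFm_subset fun k => ?_))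
    · simp [Formula.fv, Term.fv, inputTm]
    · cases k <;> simp [initStacks, Term.fv]
  have hrules : (bigAnd (labels.toList.map ruleFm)).fv ⊆ Finset.range 4 := by
    refine fv_bigAnd_subset ?_
    simp only [List.mem_map]
    rintro _ ⟨p, -, rfl⟩
    exact Finset.union_subset (fv_cfgFm_subset fv_stackVars_subset)
      (fv_compile_subset _ fv_stackVars_subset)
  have hclosure : closureFm.fv ⊆ Finset.range 0 :=
    fv_all_subset <| fv_all_subset <| fv_all_subset <| fv_all_subset hrules
  exact Finset.subset_empty.1 (Finset.union_subset hinit hclosure)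

namespace ConsAlg

variable {α : Type} (A : ConsAlg α) {R : α → α → Prop} {ρ : ℕ → α}

theorem holds_closureFm_iff : A.Holds R ρ closureFm ↔
    ∀ s : K' → α, ∀ p ∈ labels, A.TupleIn R (fun o => o.elim (A.num (labelIdx p)) s) →
      A.Holds R (assignStacks ρ s) (compile (tr p.1) p.2 stackVars 4) := by
  have hrule : ∀ s p, A.Holds R (assignStacks ρ s) (ruleFm p) ↔
      (A.TupleIn R (fun o => o.elim (A.num (labelIdx p)) s) →
        A.Holds R (assignStacks ρ s) (compile (tr p.1) p.2 stackVars 4)) := fun s p => by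
    rw [ruleFm, Holds, A.holds_cfgFm fv_stackVars_subset]
    simp only [eval_stackVars]
  simp only [closureFm, Holds, A.holds_bigAnd, List.mem_map, Finset.mem_toList,
    forall_exists_index, and_imp, forall_apply_eq_imp_iff₂]
  constructor
  · exact fun h s p hp => (hrule s p).1 (h (s .main) (s .rev) (s .aux) (s .stack) p hp)
  · exact fun h x₀ x₁ x₂ x₃ p hp =>
      (hrule (fun | .main => x₀ | .rev => x₁ | .aux => x₂ | .stack => x₃) p).2 (h _ p hp)

theorem holds_initFm (n : ℕ) : A.Holds R ρ (initFm n) ↔ A.Live R (init U [n]) := by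
  simp only [initFm, Holds, inputTm, eval_stackTm, eval, Function.update_self, exists_eq_left]
  rw [A.holds_cfgFm fun k => by cases k <;> simp [initStacks, Term.fv]]
  rw [init, live_some_iff]
  refine iff_of_eq (congrArg _ (funext fun o => ?_))
  rcases o with _ | ⟨_ | _ | _ | _⟩ <;> rfl

theorem live_of_step (h : A.Holds R ρ closureFm) {c c' : Cfg'} (hc : A.Live R c)
    (hsupp : c.l ∈ Finset.insertNone support) (hstep : TM2.step tr c = some c') :
    A.Live R c' := by
  obtain ⟨l, v, stk⟩ := c
  obtain ⟨q, hl, hT⟩ := hc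
  obtain rfl : l = some q := hl
  cases hstep
  have hrule := (A.holds_closureFm_iff.1 h) (fun k => A.emb (stk k)) (q, v)
    (by simpa [labels] using hsupp) hT
  exact (A.holds_compile R _ (eval_stackVars A ρ _) fv_stackVars_subset).1 hrule

theorem not_halts_of_holds_nonhaltFm {n : ℕ} (h : A.Holds R ρ (nonhaltFm n)) : ¬Halts n := by
  have hreach : ∀ c, StateTransition.Reaches (TM2.step tr) (init U [n]) c →
      c.l ∈ Finset.insertNone support ∧ A.Live R c := by
    intro c hc
    induction hc with
    | refl => exact ⟨init_mem_support n, (A.holds_initFm n).1 h.1⟩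
    | tail _ hstep ih => exact ⟨step_mem_support hstep ih.1, A.live_of_step h.2 ih.2 ih.1 hstep⟩
  intro hn
  obtain ⟨c, hc⟩ := Part.dom_iff_mem.1 hn
  obtain ⟨hc, hstop⟩ := StateTransition.mem_eval.1 hc
  obtain ⟨q, hq, -⟩ := (hreach c hc).2
  obtain ⟨l, v, stk⟩ := c
  obtain rfl : l = some q := hq
  cases hstop

def runRel (n : ℕ) (x y : α) : Prop :=
  ∃ i q v stk, run n i = some ⟨some q, v, stk⟩ ∧
    ∃ o, x = A.slot o (A.num i) ∧ y = A.cfgTuple q v stk o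

theorem tupleIn_runRel {n : ℕ} {x : Option K' → α} (h : A.TupleIn (A.runRel n) x) :
    ∃ i q v stk, run n i = some ⟨some q, v, stk⟩ ∧ x = A.cfgTuple q v stk := by
  obtain ⟨t, ht⟩ := h
  obtain ⟨i, q, v, stk, hrun, o, hslot, -⟩ := ht none
  obtain ⟨-, rfl⟩ := A.slot_inj hslot
  refine ⟨i, q, v, stk, hrun, funext fun o' => ?_⟩
  obtain ⟨i', q', v', stk', hrun', o'', hslot', hx⟩ := ht o'
  obtain ⟨rfl, hi⟩ := A.slot_inj hslot'
  obtain rfl := A.num_inj hi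
  rw [hrun] at hrun'
  cases hrun'
  exact hx

theorem live_runRel_of_run {n i : ℕ} {c : Cfg'} (hn : ¬Halts n) (h : run n i = some c) :
    A.Live (A.runRel n) c := by
  obtain ⟨_ | q, v, stk⟩ := c
  · exact absurd (halts_of_run h) hn
  · exact A.live_some_iff.2 ⟨A.num i, fun o => ⟨i, q, v, stk, h, o, rfl, rfl⟩⟩

theorem holds_nonhaltFm_of_not_halts {n : ℕ} (hn : ¬Halts n) (ρ : ℕ → α) :
    A.Holds (A.runRel n) ρ (nonhaltFm n) := by
  refine ⟨(A.holds_initFm n).2 (A.live_runRel_of_run (i := 0) hn rfl),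
    A.holds_closureFm_iff.2 fun s p hp hT => ?_⟩
  obtain ⟨i, q, v, stk, hrun, hx⟩ := A.tupleIn_runRel hT
  obtain rfl : p = (q, v) :=
    labelIdx_inj (Finset.mem_product.1 hp).1 (A.num_inj (congrFun hx none))
  obtain rfl : s = fun k => A.emb (stk k) := funext fun k => congrFun hx (some k)
  rw [A.holds_compile _ _ (eval_stackVars A ρ _) fv_stackVars_subset]
  exact A.live_runRel_of_run hn (run_succ hrun)

theorem exists_holds_nonhaltFm_iff (n : ℕ) :
    (∃ R ρ, A.Holds R ρ (nonhaltFm n)) ↔ ¬Halts n :=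
  ⟨fun ⟨_, _, h⟩ => A.not_halts_of_holds_nonhaltFm h,
    fun hn => ⟨_, _, A.holds_nonhaltFm_of_not_halts hn fun _ => A.nil⟩⟩

end ConsAlg

theorem encS_ofBits (l : List Bool) (t : Term) :
    encS (Term.ofBits l t).toTS = l.foldr (fun b x => Nat.pair (cond b 3 2) x) (encS t.toTS) := by
  induction l with
  | nil => rfl
  | cons b l ih => rw [List.foldr_cons, ← ih]; cases b <;> rfl

theorem encS_inputTm (n : ℕ) : encS (inputTm n).toTS =
    n.bits.foldr (fun b x => Nat.pair 3 (Nat.pair (cond b 3 2) x))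
      (Nat.pair 2 (Nat.pair 3 (Nat.pair 1 0))) := by
  have hstack : ∀ L, encS (stackTm L).toTS =
      L.foldr (fun γ x => (symBits γ).foldr (fun b x => Nat.pair (cond b 3 2) x) x)
        (Nat.pair 1 0) := by
    intro L
    induction L with
    | nil => rfl
    | cons γ L ih => rw [List.foldr_cons, ← ih]; exact encS_ofBits _ _
  rw [inputTm, hstack, trList, trList, trNat_eq_map_bits, List.foldr_append, List.foldr_map]
  congr 1
  funext b x
  cases b <;> rfl

theorem computable_encF_nonhaltFm : Computable fun n => encF (nonhaltFm n).toFm := by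
  have hl : ∀ a {f : ℕ → ℕ}, Primrec f → Primrec fun n => Nat.pair a (f n) :=
    fun a _ hf => Primrec₂.natPair.comp (Primrec.const a) hf
  have hr : ∀ b {f : ℕ → ℕ}, Primrec f → Primrec fun n => Nat.pair (f n) b :=
    fun b _ hf => Primrec₂.natPair.comp hf (Primrec.const b)
  have hstep : Primrec₂ fun (_ : ℕ) (p : Bool × ℕ) => Nat.pair 3 (Nat.pair (cond p.1 3 2) p.2) :=
    (Primrec₂.natPair.comp (Primrec.const 3) (Primrec₂.natPair.comp (Primrec.cond
      (Primrec.fst.comp Primrec.snd) (Primrec.const 3) (Primrec.const 2))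
        (Primrec.snd.comp Primrec.snd))).to₂
  have hinput : Primrec fun n => encS (inputTm n).toTS :=
    (Primrec.list_foldr Primrec.nat_bits (Primrec.const _) hstep).of_eq
      fun n => (encS_inputTm n).symm
  -- `encF (nonhaltFm n).toFm`, unfolded down to the Gödel number of the input term
  exact (hl 4 (hr _ (hl 8 (hl 0 (hl 4 (hr _ (hl 1 (hl (Nat.pair 0 0) hinput)))))))).to_comp.of_eq
    fun n => rfl

end BitRel

open UniversalTM

theorem not_exists_decider_of_reduction {P : Fm → Prop} {Q : ℕ → Prop} (hQ : ¬ComputablePred Q)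
    {Φ : ℕ → Fm} (hΦ : Computable fun n => encF (Φ n)) (hclosed : ∀ n, (Φ n).Closed)
    (hPQ : ∀ n, Q n ↔ P (Φ n)) :
    ¬∃ f : ℕ → Bool, Computable f ∧ ∀ φ : Fm, φ.Closed → (f (encF φ) = true ↔ P φ) :=
  fun ⟨f, hf, hfP⟩ => hQ <| ComputablePred.computable_of_manyOneReducible
    ⟨_, hΦ, fun n => (hPQ n).trans (hfP _ (hclosed n)).symm⟩
    (ComputablePred.computable_iff.2 ⟨f, hf, rfl⟩)

/-- The first-order theory of algebraic (co)datatypes is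
undecidable: for the signature `bool = True | False`,
`bitstring = e | 0(tail₀) | 1(tail₁)`, `dummy = f(b₁, b₂) | g(h)`, no algorithm
(no computable function on Gödel numbers of formulae) decides whether a given
sentence is valid in the theory of datatypes; equivalently, satisfiability of
first-order formulae in this theory is undecidable. The same holds when the
declarations are read as codatatype declarations. -/
theorem codatatypes_undecidable :
    (¬ ∃ f : ℕ → Bool, Computable f ∧
        ∀ φ : Fm, φ.Closed → (f (encF φ) = true ↔ ValidData φ)) ∧
    (¬ ∃ f : ℕ → Bool, Computable f ∧
        ∀ φ : Fm, (f (encF φ) = true ↔ SatData φ)) ∧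
    (¬ ∃ f : ℕ → Bool, Computable f ∧
        ∀ φ : Fm, φ.Closed → (f (encF φ) = true ↔ ValidCo φ)) ∧
    (¬ ∃ f : ℕ → Bool, Computable f ∧
        ∀ φ : Fm, (f (encF φ) = true ↔ SatCo φ)) := by
  have hΦ := computable_encF_nonhaltFm
  have hΦnot : Computable fun n => encF (.not (nonhaltFm n).toFm) :=
    (Primrec₂.natPair.comp (Primrec.const 3) Primrec.id).to_comp.comp hΦ
  have hclosed n : (nonhaltFm n).toFm.Closed := Formula.closed_toFm (fv_nonhaltFm n)
  have hnot : ¬ComputablePred fun n => ¬Halts n := fun h =>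
    not_computablePred_halts (h.not.of_eq fun _ => not_not)
  have hData n : SatData (nonhaltFm n).toFm ↔ ¬Halts n :=
    (satData_toFm_iff _).trans (listAlg.exists_holds_nonhaltFm_iff n)
  have hCo n : SatCo (nonhaltFm n).toFm ↔ ¬Halts n :=
    (satCo_toFm_iff _).trans (streamAlg.exists_holds_nonhaltFm_iff n)
  refine ⟨?_, fun ⟨f, hf, h⟩ => ?_, ?_, fun ⟨f, hf, h⟩ => ?_⟩
  · exact not_exists_decider_of_reduction not_computablePred_halts hΦnot hclosed
      fun n => by rw [validData_not_iff, hData, not_not]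
  · exact not_exists_decider_of_reduction hnot hΦ hclosed (fun n => (hData n).symm)
      ⟨f, hf, fun φ _ => h φ⟩
  · exact not_exists_decider_of_reduction not_computablePred_halts hΦnot hclosed
      fun n => by rw [validCo_not_iff, hCo, not_not]
  · exact not_exists_decider_of_reduction hnot hΦ hclosed (fun n => (hCo n).symm)
      ⟨f, hf, fun φ _ => h φ⟩
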